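/- Let μ = P_X ⊗ π_0 and ν = P_X ⊗ π_θ be joint probability measures on contexts and actions with ν ≪ μ and importance weight w = dν/dμ satisfying w ≤ w_m everywhere for some finite w_m. Let the reward function f take values in [−1, 0], define the true risk R(π_θ) = E_ν[f], and for n i.i.d. samples (X_1,A_1),…,(X_n,A_n) drawn from μ define the inverse-propensity-score empirical risk R̂(π_θ, S) = (1/n) Σ_{i=1}^n f(X_i,A_i)·w(X_i,A_i). Then for any δ ∈ (0,1), with probability at least 1−δ over the sample, R(π_θ) ≤ R̂(π_θ, S) + w_m·log(1/δ)/(3n) + √((w_m·√(2·min(D(ν‖μ), D(μ‖ν))) + 2)·log(1/δ)/n). -/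

import Mathlib

open MeasureTheory ProbabilityTheory Real
open scoped ENNReal Classical ProbabilityTheory

/-- The Kullback–Leibler divergence `D(P ‖ Q)`: equal to `∫ log (dP/dQ) dP` when `P ≪ Q`
(and the log-likelihood ratio is integrable), and `∞` otherwise. -/
noncomputable def klDiv {Z : Type*} [MeasurableSpace Z] (P Q : Measure Z) : ℝ≥0∞ :=
  if P ≪ Q ∧ Integrable (llr P Q) P then ENNReal.ofReal (∫ z, llr P Q z ∂P) else ⊤

/-!
Write the IPS summand as `f w = -g` with `g ∈ [0, w_m]`, so that `R(π_θ) = -E_μ[g]` and the claim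
is an upper deviation bound for the empirical mean of `g`. Bernstein's inequality gives it with
variance proxy `E_μ[g²] ≤ E_μ[w²]`. Since `0 ≤ w ≤ w_m` and `E_μ[w] = 1`, one has
`E_μ[w²] ≤ 1 + (w_m / 2) ‖w - 1‖_{L¹(μ)}`, and the total variation distance
`‖dν/dμ - 1‖_{L¹(μ)} = ‖dμ/dν - 1‖_{L¹(ν)}` is at most `√(2 D)` by Pinsker's inequality, for
either direction `D` of the divergence.
-/

lemma exp_mul_sub_one_sub_le {s y : ℝ} (hs : s ≤ 1) (hy : 0 ≤ y) :
    exp (s * y) - 1 - s * y ≤ s ^ 2 * (exp y - 1 - y) := by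
  have hderiv : ∀ x, HasDerivAt (fun x ↦ s ^ 2 * (exp x - 1 - x) - (exp (s * x) - 1 - s * x))
      (s ^ 2 * (exp x - 1) - s * (exp (s * x) - 1)) x := fun x ↦ by
    have hsx : HasDerivAt (fun x ↦ s * x) s x := by simpa using (hasDerivAt_id x).const_mul s
    exact (((((hasDerivAt_exp x).sub_const 1).sub (hasDerivAt_id x)).const_mul (s ^ 2)).sub
      ((hsx.exp.sub_const 1).sub hsx)).congr_deriv (by ring)
  have hmono := monotone_of_hasDerivAt_nonneg hderiv fun x ↦ by
    simp only [Pi.zero_apply]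
    have hx := add_one_le_exp x
    rcases le_total s 0 with hs0 | hs0
    · have := add_one_le_exp (s * x)
      nlinarith [mul_le_mul_of_nonpos_left (show s * x ≤ exp (s * x) - 1 by linarith) hs0]
    · have hconv : exp (s * x) ≤ (1 - s) + s * exp x := by
        simpa [smul_eq_mul, mul_comm] using
          convexOn_exp.2 (Set.mem_univ 0) (Set.mem_univ x) (by linarith) hs0 (by ring)
      nlinarith
  simpa using hmono hy

lemma mul_exp_sub_one_sub_le_sq {c : ℝ} (hc : 0 ≤ c) :
    2 * (1 - c / 3) * (exp c - 1 - c) ≤ c ^ 2 := by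
  have hlin : ∀ y, HasDerivAt (fun y : ℝ ↦ 2 * (1 - y / 3)) (-(2 / 3)) y := fun y ↦
    ((((hasDerivAt_id y).div_const 3).const_sub 1).const_mul 2).congr_deriv (by ring)
  set F' : ℝ → ℝ := fun y ↦ 2 * y + 2 / 3 * (exp y - 1 - y) - 2 * (1 - y / 3) * (exp y - 1)
  have hF'' : ∀ y, HasDerivAt F' (2 / 3 * (1 + (y - 1) * exp y)) y := fun y ↦
    ((((hasDerivAt_id y).const_mul 2).add ((((hasDerivAt_exp y).sub_const 1).sub
      (hasDerivAt_id y)).const_mul (2 / 3))).sub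
      ((hlin y).mul ((hasDerivAt_exp y).sub_const 1))).congr_deriv (by ring)
  have hF'_nonneg : ∀ y, 0 ≤ y → 0 ≤ F' y := by
    intro y hy
    have hmono := monotone_of_hasDerivAt_nonneg hF'' fun x ↦ by
      -- `1 + (x - 1) e^x ≥ 0` is `e^{-x} ≥ 1 - x` multiplied by `e^x`
      have h := mul_le_mul_of_nonneg_right (add_one_le_exp (-x)) (exp_pos x).le
      rw [← exp_add, neg_add_cancel, exp_zero] at h
      simp only [Pi.zero_apply]
      nlinarith
    simpa [F'] using hmono hy
  have hF : ∀ y, HasDerivAt (fun y ↦ y ^ 2 - 2 * (1 - y / 3) * (exp y - 1 - y)) (F' y) y :=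
    fun y ↦ ((hasDerivAt_pow 2 y).sub ((hlin y).mul
      (((hasDerivAt_exp y).sub_const 1).sub (hasDerivAt_id y)))).congr_deriv
      (by simp only [F', Pi.sub_apply, id]; ring)
  have hmono := monotoneOn_of_hasDerivWithinAt_nonneg (convex_Ici 0)
    (fun y _ ↦ (hF y).continuousAt.continuousWithinAt) (fun y _ ↦ (hF y).hasDerivWithinAt)
    fun y hy ↦ hF'_nonneg y (interior_subset hy)
  simpa using hmono Set.self_mem_Ici hc hc

lemma exists_bernstein_exponent {b V L : ℝ} (hb : 0 < b) (hV : 0 < V) (hL : 0 < L) :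
    ∃ t, 0 ≤ t ∧ V * (exp (t * b) - 1 - t * b) / b ^ 2 - t * (b * L / 3 + √(2 * V * L)) ≤ -L := by
  set r := √(2 * L / V)
  have hr : 0 < r := sqrt_pos.2 (by positivity)
  have hr2 : r ^ 2 = 2 * L / V := sq_sqrt (by positivity)
  have hrV : r * √(2 * V * L) = 2 * L := by
    rw [← sqrt_mul (by positivity), show 2 * L / V * (2 * V * L) = (2 * L) ^ 2 by field_simp,
      sqrt_sq (by positivity)]
  set D := 1 + b * r / 3
  have hD : 0 < D := by positivity
  refine ⟨r / D, by positivity, ?_⟩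
  -- with `c = t b` one has `1 - c / 3 = 1 / D`, so the bound on `e^c - 1 - c` reads `≤ c² D / 2`
  have hψ := mul_exp_sub_one_sub_le_sq (c := r / D * b) (by positivity)
  rw [show 1 - r / D * b / 3 = 1 / D by field_simp; ring] at hψ
  have hψ' : exp (r / D * b) - 1 - r / D * b ≤ (r / D * b) ^ 2 * D / 2 := by
    rw [le_div_iff₀ two_pos]
    calc _ = 2 * (1 / D) * (exp (r / D * b) - 1 - r / D * b) * D := by field_simp
      _ ≤ _ := by gcongr
  calc V * (exp (r / D * b) - 1 - r / D * b) / b ^ 2 - r / D * (b * L / 3 + √(2 * V * L))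
      ≤ V * ((r / D * b) ^ 2 * D / 2) / b ^ 2 - r / D * (b * L / 3 + √(2 * V * L)) := by
        gcongr
    _ = (V * r ^ 2 / 2 - b * r * L / 3 - r * √(2 * V * L)) / D := by field_simp; ring
    _ = -L := by rw [hr2, hrV]; field_simp; ring

section Bernstein

variable {Ω : Type*} [MeasurableSpace Ω] {P : Measure Ω} [IsProbabilityMeasure P]

lemma mgf_le_exp_of_le {Y : Ω → ℝ} (hY : MemLp Y 2 P) {b σ2 t : ℝ} (hb : 0 < b)
    (hYb : ∀ ω, Y ω ≤ b) (hmean : P[Y] = 0) (hvar : ∫ ω, Y ω ^ 2 ∂P ≤ σ2) (ht : 0 ≤ t) :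
    mgf Y P t ≤ exp (σ2 * (exp (t * b) - 1 - t * b) / b ^ 2) := by
  set ψ := exp (t * b) - 1 - t * b
  have hψ : 0 ≤ ψ := by linarith [add_one_le_exp (t * b)]
  have hpt : ∀ ω, exp (t * Y ω) ≤ 1 + t * Y ω + Y ω ^ 2 * (ψ / b ^ 2) := fun ω ↦ by
    have h := exp_mul_sub_one_sub_le (s := Y ω / b) (y := t * b)
      ((div_le_one hb).2 (hYb ω)) (by positivity)
    rw [show Y ω / b * (t * b) = t * Y ω by field_simp] at h
    rw [show Y ω ^ 2 * (ψ / b ^ 2) = (Y ω / b) ^ 2 * ψ by ring]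
    linarith
  have hY1 : Integrable Y P := hY.integrable one_le_two
  have hY2 : Integrable (fun ω ↦ Y ω ^ 2 * (ψ / b ^ 2)) P := hY.integrable_sq.mul_const _
  have hlin : Integrable (fun ω ↦ 1 + t * Y ω) P := (integrable_const 1).add (hY1.const_mul t)
  calc mgf Y P t ≤ ∫ ω, 1 + t * Y ω + Y ω ^ 2 * (ψ / b ^ 2) ∂P :=
        integral_mono (integrable_exp_mul_of_le t b ht hY1.aemeasurable (ae_of_all _ hYb))
          (hlin.add hY2) hpt
    _ = 1 + (∫ ω, Y ω ^ 2 ∂P) * (ψ / b ^ 2) := by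
        rw [integral_add hlin hY2, integral_add (integrable_const 1) (hY1.const_mul t),
          integral_const_mul, hmean, integral_mul_const]
        simp
    _ ≤ 1 + σ2 * (ψ / b ^ 2) := by gcongr
    _ ≤ exp (σ2 * ψ / b ^ 2) := by
        rw [mul_div_assoc]; linarith [add_one_le_exp (σ2 * (ψ / b ^ 2))]

theorem measureReal_sum_ge_le_of_iIndepFun {ι : Type*} [Fintype ι] [Nonempty ι] {Y : ι → Ω → ℝ}
    (hindep : iIndepFun Y P) (hY : ∀ i, MemLp (Y i) 2 P) {b σ2 L : ℝ} (hb : 0 < b)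
    (hσ2 : 0 < σ2) (hL : 0 < L) (hYb : ∀ i ω, Y i ω ≤ b) (hmean : ∀ i, P[Y i] = 0)
    (hvar : ∀ i, ∫ ω, Y i ω ^ 2 ∂P ≤ σ2) :
    P.real {ω | b * L / 3 + √(2 * (Fintype.card ι * σ2) * L) ≤ ∑ i, Y i ω} ≤ exp (-L) := by
  set V := Fintype.card ι * σ2
  have hV : 0 < V := mul_pos (by exact_mod_cast Fintype.card_pos) hσ2
  obtain ⟨t, ht, hopt⟩ := exists_bernstein_exponent hb hV hL
  have hsum : (fun ω ↦ ∑ i, Y i ω) = ∑ i, Y i := by ext ω; simp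
  have hmgf : mgf (fun ω ↦ ∑ i, Y i ω) P t ≤ exp (V * (exp (t * b) - 1 - t * b) / b ^ 2) := by
    rw [hsum, hindep.mgf_sum₀ (fun i ↦ (hY i).aestronglyMeasurable.aemeasurable)]
    calc ∏ i, mgf (Y i) P t ≤ ∏ _i : ι, exp (σ2 * (exp (t * b) - 1 - t * b) / b ^ 2) :=
          Finset.prod_le_prod (fun i _ ↦ mgf_nonneg)
            fun i _ ↦ mgf_le_exp_of_le (hY i) hb (hYb i) (hmean i) (hvar i) ht
      _ = exp (V * (exp (t * b) - 1 - t * b) / b ^ 2) := by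
          rw [Finset.prod_const, ← exp_nat_mul, Finset.card_univ, mul_div_assoc, mul_div_assoc,
            mul_assoc]
  calc P.real {ω | b * L / 3 + √(2 * V * L) ≤ ∑ i, Y i ω}
      ≤ exp (-t * (b * L / 3 + √(2 * V * L))) * mgf (fun ω ↦ ∑ i, Y i ω) P t :=
        measure_ge_le_exp_mul_mgf _ ht (integrable_exp_mul_of_le t (Fintype.card ι * b) ht
          (Finset.aemeasurable_fun_sum _ fun i _ ↦ (hY i).aestronglyMeasurable.aemeasurable)
          (ae_of_all _ fun ω ↦ (Finset.sum_le_sum fun i _ ↦ hYb i ω).trans_eq (by simp)))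
    _ ≤ exp (-t * (b * L / 3 + √(2 * V * L))) * exp (V * (exp (t * b) - 1 - t * b) / b ^ 2) := by
        gcongr
    _ ≤ exp (-L) := by rw [← exp_add, exp_le_exp]; linarith

end Bernstein

lemma ofReal_one_sub_le_measure {Ω : Type*} [MeasurableSpace Ω] {P : Measure Ω}
    [IsProbabilityMeasure P] {B S : Set Ω} (hB : MeasurableSet B) (hBS : Bᶜ ⊆ S) {ε : ℝ}
    (hε : P.real B ≤ ε) : ENNReal.ofReal (1 - ε) ≤ P S :=
  calc ENNReal.ofReal (1 - ε) ≤ ENNReal.ofReal (P.real Bᶜ) :=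
        ENNReal.ofReal_le_ofReal (by rw [probReal_compl_eq_one_sub hB]; linarith)
    _ = P Bᶜ := ofReal_measureReal
    _ ≤ P S := measure_mono hBS

theorem ofReal_one_sub_exp_le_measure_sampleMean_le {Z Ω : Type*} [MeasurableSpace Z]
    [MeasurableSpace Ω] {μ : Measure Z} [IsProbabilityMeasure μ] {P : Measure Ω}
    [IsProbabilityMeasure P] {n : ℕ} (hn : 0 < n) {Zs : Fin n → Ω → Z}
    (hmeas : ∀ i, Measurable (Zs i)) (hindep : iIndepFun Zs P) (hdist : ∀ i, P.map (Zs i) = μ)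
    {g : Z → ℝ} (hg : Measurable g) {M v L : ℝ} (hM : 0 < M) (hgM : ∀ z, g z ∈ Set.Icc 0 M)
    (hv : 0 < v) (hgv : ∫ z, g z ^ 2 ∂μ ≤ v) (hL : 0 < L) :
    ENNReal.ofReal (1 - exp (-L)) ≤
      P {ω | 1 / (n : ℝ) * ∑ i, g (Zs i ω) ≤ ∫ z, g z ∂μ + M * L / (3 * n) + √(2 * v * L / n)} := by
  set m := ∫ z, g z ∂μ
  have hgi : Integrable g μ := .of_mem_Icc 0 M hg.aemeasurable (ae_of_all _ hgM)
  have hm : m ∈ Set.Icc 0 M := ⟨integral_nonneg fun z ↦ (hgM z).1,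
    (integral_mono hgi (integrable_const M) fun z ↦ (hgM z).2).trans_eq (by simp)⟩
  set Y : Fin n → Ω → ℝ := fun i ω ↦ g (Zs i ω) - m
  have hYmeas : ∀ i, Measurable (Y i) := fun i ↦ (hg.comp (hmeas i)).sub_const m
  have htransfer : ∀ i {φ : Z → ℝ}, Measurable φ → ∫ ω, φ (Zs i ω) ∂P = ∫ z, φ z ∂μ :=
    fun i φ hφ ↦ by rw [← hdist i, integral_map (hmeas i).aemeasurable hφ.aestronglyMeasurable]
  have hmean : ∀ i, P[Y i] = 0 := fun i ↦ by
    rw [htransfer i (hg.sub_const m), integral_sub hgi (integrable_const m)]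
    simp [m]
  have hvar : ∀ i, ∫ ω, Y i ω ^ 2 ∂P ≤ v := fun i ↦ by
    rw [htransfer i ((hg.sub_const m).pow_const 2), ← variance_eq_integral hg.aemeasurable]
    exact (variance_le_expectation_sq hg.aestronglyMeasurable).trans (by simpa using hgv)
  have : Nonempty (Fin n) := ⟨⟨0, hn⟩⟩
  set B := {ω | M * L / 3 + √(2 * (Fintype.card (Fin n) * v) * L) ≤ ∑ i, Y i ω}
  have hB : P.real B ≤ exp (-L) :=
    measureReal_sum_ge_le_of_iIndepFun (Y := Y) (hindep.comp _ fun i ↦ hg.sub_const m)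
      (fun i ↦ .of_bound (hYmeas i).aestronglyMeasurable M (ae_of_all _ fun ω ↦
        abs_le.2 ⟨by linarith [(hgM (Zs i ω)).1, hm.2], by linarith [(hgM (Zs i ω)).2, hm.1]⟩))
      hM hv hL (fun i ω ↦ by linarith [(hgM (Zs i ω)).2, hm.1]) hmean hvar
  have hBmeas : MeasurableSet B :=
    measurableSet_le measurable_const (Finset.measurable_sum _ fun i _ ↦ hYmeas i)
  refine ofReal_one_sub_le_measure hBmeas (fun ω hω ↦ ?_) hB
  simp only [B, Set.mem_compl_iff, Set.mem_ofPred_eq, not_le, Fintype.card_fin, Y,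
    Finset.sum_sub_distrib, Finset.sum_const, Finset.card_univ, nsmul_eq_mul] at hω ⊢
  have hn' : (0 : ℝ) < n := Nat.cast_pos.2 hn
  have hsqrt : √(2 * (n * v) * L) / n = √(2 * v * L / n) := by
    rw [show 2 * v * L / n = 2 * (n * v) * L / n ^ 2 by field_simp, sqrt_div' _ (sq_nonneg _),
      sqrt_sq hn'.le]
  calc 1 / (n : ℝ) * ∑ i, g (Zs i ω) = m + (∑ i, g (Zs i ω) - n * m) / n := by field_simp; ring
    _ ≤ m + (M * L / 3 + √(2 * (n * v) * L)) / n := by gcongr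
    _ = m + M * L / (3 * n) + √(2 * v * L / n) := by rw [← hsqrt]; ring

section Pinsker

open InformationTheory

lemma sq_sub_one_le_mul_klFun {x : ℝ} (hx : 0 ≤ x) :
    3 * (x - 1) ^ 2 ≤ (2 * x + 4) * klFun x := by
  set G : ℝ → ℝ := fun y ↦ (y + 1) * log y - 2 * (y - 1)
  have hGd : ∀ y, 0 < y → HasDerivAt G (log y + y⁻¹ - 1) y := fun y hy ↦
    ((((hasDerivAt_id y).add_const 1).mul (hasDerivAt_log hy.ne')).sub
      (((hasDerivAt_id y).sub_const 1).const_mul 2)).congr_deriv (by simp only [id]; field_simp; ring)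
  have hG : MonotoneOn G (Set.Ioi 0) :=
    monotoneOn_of_hasDerivWithinAt_nonneg (convex_Ioi 0)
      (fun y hy ↦ (hGd y hy).continuousAt.continuousWithinAt)
      (fun y hy ↦ (hGd y (interior_subset hy)).hasDerivWithinAt)
      fun y hy ↦ by linarith [one_sub_inv_le_log_of_pos (interior_subset hy : 0 < y)]
  have hG1 : G 1 = 0 := by simp [G]
  set h : ℝ → ℝ := fun y ↦ (2 * y + 4) * klFun y - 3 * (y - 1) ^ 2
  have hcont : Continuous h := by fun_prop
  have hderiv : ∀ y, 0 < y → HasDerivAt h (4 * G y) y := fun y hy ↦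
    ((((hasDerivAt_id y).const_mul 2).add_const 4).mul (hasDerivAt_klFun hy.ne')).sub
      ((((hasDerivAt_id y).sub_const 1).pow 2).const_mul 3) |>.congr_deriv
      (by simp only [G, klFun, id]; ring)
  -- `h' = 4 G` changes sign at `1`, since `G` is increasing with `G 1 = 0`
  suffices h 1 ≤ h x by simpa [h, klFun_one] using this
  rcases le_total x 1 with hx1 | hx1
  · refine antitoneOn_of_hasDerivWithinAt_nonpos (f' := fun y ↦ 4 * G y) (convex_Icc 0 1)
      hcont.continuousOn (fun y hy ↦ ?_) (fun y hy ↦ ?_) ⟨hx, hx1⟩ ⟨zero_le_one, le_rfl⟩ hx1 <;>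
      rw [interior_Icc] at hy
    · exact (hderiv y hy.1).hasDerivWithinAt
    · linarith [hG hy.1 (Set.mem_Ioi.2 one_pos) hy.2.le]
  · refine monotoneOn_of_hasDerivWithinAt_nonneg (f' := fun y ↦ 4 * G y) (convex_Ici 1)
      hcont.continuousOn (fun y hy ↦ ?_) (fun y hy ↦ ?_) Set.self_mem_Ici hx1 hx1 <;>
      rw [interior_Ici] at hy
    · exact (hderiv y (one_pos.trans hy)).hasDerivWithinAt
    · linarith [hG (Set.mem_Ioi.2 one_pos) (Set.mem_Ioi.2 (one_pos.trans hy)) hy.le]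

lemma abs_sub_one_le_of_klFun {x s : ℝ} (hx : 0 ≤ x) (hs : 0 < s) :
    |x - 1| ≤ s * (2 * x + 4) / 6 + klFun x / (2 * s) := by
  have hk := klFun_nonneg hx
  refine abs_le_of_sq_le_sq ?_ (by positivity)
  -- AM-GM: `(s A / 2 + k / (2 s))² ≥ A k` with `A = (2 x + 4) / 3`, `k = klFun x`
  have hamgm : (2 * x + 4) * klFun x ≤ 3 * (s * (2 * x + 4) / 6 + klFun x / (2 * s)) ^ 2 := by
    have := sq_nonneg (s * (2 * x + 4) / 6 - klFun x / (2 * s))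
    have e : (s * (2 * x + 4) / 6 + klFun x / (2 * s)) ^ 2
        = (s * (2 * x + 4) / 6 - klFun x / (2 * s)) ^ 2 + (2 * x + 4) * klFun x / 3 := by
      field_simp; ring
    linarith
  linarith [sq_sub_one_le_mul_klFun hx]

lemma integral_abs_sub_one_le_sqrt_integral_klFun {Z : Type*} [MeasurableSpace Z]
    {Q : Measure Z} [IsProbabilityMeasure Q] {W : Z → ℝ} (hW0 : ∀ x, 0 ≤ W x)
    (hW : Integrable W Q) (hW1 : ∫ x, W x ∂Q = 1) (hK : Integrable (fun x ↦ klFun (W x)) Q) :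
    ∫ x, |W x - 1| ∂Q ≤ √(2 * ∫ x, klFun (W x) ∂Q) := by
  set I := ∫ x, |W x - 1| ∂Q
  have hI0 : 0 ≤ I := integral_nonneg fun x ↦ abs_nonneg (W x - 1)
  rcases hI0.eq_or_lt with hI | hI
  · exact hI.symm.le.trans (sqrt_nonneg _)
  -- integrate the pointwise bound with the weight `s = I / 2`
  have hA : Integrable (fun x ↦ I / 2 * (2 * W x + 4) / 6) Q :=
    (((hW.const_mul 2).add (integrable_const 4)).const_mul (I / 2)).div_const 6
  have hbound : I ≤ I / 2 + (∫ x, klFun (W x) ∂Q) / I := by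
    calc I ≤ ∫ x, (I / 2 * (2 * W x + 4) / 6 + klFun (W x) / (2 * (I / 2))) ∂Q :=
          integral_mono (hW.sub (integrable_const 1)).abs (hA.add (hK.div_const _))
            fun x ↦ abs_sub_one_le_of_klFun (hW0 x) (half_pos hI)
      _ = I / 2 + (∫ x, klFun (W x) ∂Q) / I := by
          rw [integral_add hA (hK.div_const _), integral_div, integral_const_mul,
            integral_add (hW.const_mul 2) (integrable_const 4), integral_const_mul, hW1,
            integral_div]
          simp only [integral_const, probReal_univ, smul_eq_mul]
          field_simp; ring
  rw [le_sqrt' hI]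
  have := (le_div_iff₀ hI).1 (by linarith : I / 2 ≤ (∫ x, klFun (W x) ∂Q) / I)
  nlinarith

end Pinsker

section RadonNikodym

variable {Z : Type*} [MeasurableSpace Z] {P Q : Measure Z}

variable (P Q) in
lemma klDiv_eq_informationTheory_klDiv [IsProbabilityMeasure P]
    [IsProbabilityMeasure Q] : klDiv P Q = InformationTheory.klDiv P Q := by
  simp [klDiv, InformationTheory.klDiv_def]

lemma integral_abs_rnDeriv_sub_one_le [IsProbabilityMeasure P] [IsProbabilityMeasure Q]
    (h : klDiv P Q ≠ ⊤) :
    ∫ x, |(P.rnDeriv Q x).toReal - 1| ∂Q ≤ √(2 * (klDiv P Q).toReal) := by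
  rw [klDiv_eq_informationTheory_klDiv] at h ⊢
  obtain ⟨hPQ, hint⟩ := InformationTheory.klDiv_ne_top_iff.1 h
  rw [InformationTheory.toReal_klDiv_eq_integral_klFun hPQ]
  exact integral_abs_sub_one_le_sqrt_integral_klFun (fun _ ↦ ENNReal.toReal_nonneg)
    Measure.integrable_toReal_rnDeriv (by simp [Measure.integral_toReal_rnDeriv hPQ])
    ((InformationTheory.integrable_klFun_rnDeriv_iff hPQ).2 hint)

lemma integral_abs_rnDeriv_sub_one_comm [SigmaFinite P] [SigmaFinite Q] (hPQ : P ≪ Q)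
    (hQP : Q ≪ P) :
    ∫ x, |(P.rnDeriv Q x).toReal - 1| ∂Q = ∫ x, |(Q.rnDeriv P x).toReal - 1| ∂P := by
  rw [← integral_rnDeriv_smul hPQ]
  -- `Q`-a.e. `(dQ/dP) (dP/dQ) = 1`, hence `|dP/dQ - 1| = (dP/dQ) |dQ/dP - 1|`
  refine integral_congr_ae ?_
  filter_upwards [(Measure.rnDeriv_mul_rnDeriv hQP).trans (Measure.rnDeriv_self Q)] with x hx
  have h1 : (Q.rnDeriv P x).toReal * (P.rnDeriv Q x).toReal = 1 := by
    simpa [← ENNReal.toReal_mul] using congrArg ENNReal.toReal hx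
  rw [smul_eq_mul, ← abs_of_nonneg (ENNReal.toReal_nonneg (a := P.rnDeriv Q x)), ← abs_mul,
    abs_of_nonneg (ENNReal.toReal_nonneg (a := P.rnDeriv Q x)), abs_sub_comm]
  congr 1
  linear_combination -h1

lemma integral_abs_rnDeriv_sub_one_le_min_klDiv [IsProbabilityMeasure P] [IsProbabilityMeasure Q]
    (hPQ : P ≪ Q) (h : min (klDiv P Q) (klDiv Q P) ≠ ⊤) :
    ∫ x, |(P.rnDeriv Q x).toReal - 1| ∂Q ≤ √(2 * (min (klDiv P Q) (klDiv Q P)).toReal) := by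
  rcases le_total (klDiv P Q) (klDiv Q P) with hle | hle
  · rw [min_eq_left hle] at h ⊢
    exact integral_abs_rnDeriv_sub_one_le h
  · rw [min_eq_right hle] at h ⊢
    have hQP : Q ≪ P := (InformationTheory.klDiv_ne_top_iff.1
      (klDiv_eq_informationTheory_klDiv Q P ▸ h)).1
    rw [integral_abs_rnDeriv_sub_one_comm hPQ hQP]
    exact integral_abs_rnDeriv_sub_one_le h

lemma integral_sq_le_one_add_mul_integral_abs_sub_one [IsProbabilityMeasure Q] {W : Z → ℝ}
    {M : ℝ} (hW : AEMeasurable W Q) (hW0 : ∀ x, 0 ≤ W x) (hWM : ∀ x, W x ≤ M)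
    (hW1 : ∫ x, W x ∂Q = 1) :
    ∫ x, W x ^ 2 ∂Q ≤ 1 + M / 2 * ∫ x, |W x - 1| ∂Q := by
  have hWi : Integrable W Q := .of_mem_Icc 0 M hW (ae_of_all _ fun x ↦ ⟨hW0 x, hWM x⟩)
  have hWsub : Integrable (fun x ↦ W x - 1) Q := hWi.sub (integrable_const 1)
  have hpos : Integrable (fun x ↦ M / 2 * (|W x - 1| + (W x - 1))) Q :=
    (hWsub.abs.add hWsub).const_mul _
  -- `W² - W = W (W - 1) ≤ M (W - 1)⁺`
  have hpt : ∀ x, W x ^ 2 ≤ W x + M / 2 * (|W x - 1| + (W x - 1)) := fun x ↦ by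
    have := hW0 x; have := hWM x
    rcases le_total 1 (W x) with h | h
    · rw [abs_of_nonneg (by linarith)]; nlinarith
    · rw [abs_of_nonpos (by linarith)]; nlinarith
  calc ∫ x, W x ^ 2 ∂Q ≤ ∫ x, W x + M / 2 * (|W x - 1| + (W x - 1)) ∂Q :=
        integral_mono (.of_mem_Icc 0 (M ^ 2) (hW.pow_const 2) (ae_of_all _ fun x ↦
          ⟨sq_nonneg _, pow_le_pow_left₀ (hW0 x) (hWM x) 2⟩)) (hWi.add hpos) hpt
    _ = 1 + M / 2 * ∫ x, |W x - 1| ∂Q := by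
        rw [integral_add hWi hpos, integral_const_mul, integral_add hWsub.abs hWsub,
          integral_sub hWi (integrable_const 1), hW1]
        simp

lemma one_le_of_rnDeriv_le [IsProbabilityMeasure P] [IsProbabilityMeasure Q] (hPQ : P ≪ Q)
    {M : ℝ} (hM : ∀ x, P.rnDeriv Q x ≤ ENNReal.ofReal M) : 1 ≤ M := by
  have h := lintegral_mono (μ := Q) hM
  rw [Measure.lintegral_rnDeriv hPQ, lintegral_const, measure_univ, measure_univ, mul_one] at h
  exact ENNReal.one_le_ofReal.1 h

theorem integral_sq_rnDeriv_le [IsProbabilityMeasure P] [IsProbabilityMeasure Q] (hPQ : P ≪ Q)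
    {M : ℝ} (hM : ∀ x, P.rnDeriv Q x ≤ ENNReal.ofReal M)
    (h : min (klDiv P Q) (klDiv Q P) ≠ ⊤) :
    ∫ x, (P.rnDeriv Q x).toReal ^ 2 ∂Q
      ≤ 1 + M / 2 * √(2 * (min (klDiv P Q) (klDiv Q P)).toReal) := by
  have hM1 := one_le_of_rnDeriv_le hPQ hM
  calc ∫ x, (P.rnDeriv Q x).toReal ^ 2 ∂Q
      ≤ 1 + M / 2 * ∫ x, |(P.rnDeriv Q x).toReal - 1| ∂Q :=
        integral_sq_le_one_add_mul_integral_abs_sub_one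
          (Measure.measurable_rnDeriv P Q).ennreal_toReal.aemeasurable
          (fun _ ↦ ENNReal.toReal_nonneg)
          (fun x ↦ ENNReal.toReal_le_of_le_ofReal (by linarith) (hM x))
          (by simp [Measure.integral_toReal_rnDeriv hPQ])
    _ ≤ _ := by gcongr; exact integral_abs_rnDeriv_sub_one_le_min_klDiv hPQ h

theorem integral_sq_mul_rnDeriv_le [IsProbabilityMeasure P] [IsProbabilityMeasure Q] (hPQ : P ≪ Q)
    {M : ℝ} (hM : ∀ x, P.rnDeriv Q x ≤ ENNReal.ofReal M)
    (h : min (klDiv P Q) (klDiv Q P) ≠ ⊤) {f : Z → ℝ} (hf : ∀ x, |f x| ≤ 1) :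
    ∫ x, (f x * (P.rnDeriv Q x).toReal) ^ 2 ∂Q
      ≤ 1 + M / 2 * √(2 * (min (klDiv P Q) (klDiv Q P)).toReal) := by
  have hM0 : 0 ≤ M := zero_le_one.trans (one_le_of_rnDeriv_le hPQ hM)
  have hint : Integrable (fun x ↦ (P.rnDeriv Q x).toReal ^ 2) Q :=
    .of_mem_Icc 0 (M ^ 2)
      ((Measure.measurable_rnDeriv P Q).ennreal_toReal.pow_const 2).aemeasurable
      (ae_of_all _ fun x ↦ ⟨sq_nonneg _, pow_le_pow_left₀ ENNReal.toReal_nonneg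
        (ENNReal.toReal_le_of_le_ofReal hM0 (hM x)) 2⟩)
  refine le_trans (integral_mono_of_nonneg (ae_of_all _ fun _ ↦ sq_nonneg _) hint
    (ae_of_all _ fun x ↦ ?_)) (integral_sq_rnDeriv_le hPQ hM h)
  simp only [mul_pow]
  exact mul_le_of_le_one_left (sq_nonneg _) ((sq_le_one_iff_abs_le_one _).2 (hf x))

end RadonNikodym

/-- Let `μ = P_X ⊗ π₀`, `ν = P_X ⊗ π_θ` with `ν ≪ μ` and importance weight
`w = dν/dμ ≤ w_m` everywhere, and let the reward `f` take values in `[−1,0]`. With true risk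
`R(π_θ) = E_ν[f]` and the IPS empirical risk on `n` i.i.d. samples from `μ`, for any
`δ ∈ (0,1)`, with probability at least `1 − δ`,
`R(π_θ) ≤ R̂ + w_m·log(1/δ)/(3n) + √((w_m·√(2·min(D(ν‖μ),D(μ‖ν))) + 2)·log(1/δ)/n)`.
(When both divergences are `∞` the claim is vacuous, captured by the finiteness hypothesis.) -/
theorem stmt_7 {X A : Type*} [MeasurableSpace X] [MeasurableSpace A]
    (PX : Measure X) [IsProbabilityMeasure PX]
    (π0 πθ : Kernel X A) [IsMarkovKernel π0] [IsMarkovKernel πθ]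
    (f : X × A → ℝ) (hf : Measurable f)
    (hfb : ∀ p, f p ∈ Set.Icc (-1 : ℝ) 0)
    (μ ν : Measure (X × A)) (hμ : μ = PX ⊗ₘ π0) (hν : ν = PX ⊗ₘ πθ)
    (hac : ν ≪ μ)
    (w : X × A → ℝ) (hw : w = fun p => (ν.rnDeriv μ p).toReal)
    (w_m : ℝ) (hwm : ∀ p, ν.rnDeriv μ p ≤ ENNReal.ofReal w_m)
    {Ω : Type*} [MeasurableSpace Ω] (P : Measure Ω) [IsProbabilityMeasure P]
    (n : ℕ) (hn : 0 < n) (Zs : Fin n → Ω → X × A)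
    (hmeas : ∀ i, Measurable (Zs i))
    (hindep : iIndepFun Zs P)
    (hdist : ∀ i, Measure.map (Zs i) P = μ)
    (δ : ℝ) (hδ : δ ∈ Set.Ioo (0 : ℝ) 1)
    (hfin : min (klDiv ν μ) (klDiv μ ν) ≠ ⊤) :
    ENNReal.ofReal (1 - δ) ≤
      P {ω | ∫ p, f p ∂ν ≤
        (1 / (n : ℝ)) * ∑ i, f (Zs i ω) * w (Zs i ω)
          + w_m * Real.log (1 / δ) / (3 * n)
          + Real.sqrt
              ((w_m * Real.sqrt (2 * (min (klDiv ν μ) (klDiv μ ν)).toReal) + 2)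
                * Real.log (1 / δ) / n)} := by
  obtain ⟨hδ0, hδ1⟩ := hδ
  have : IsProbabilityMeasure μ := hμ ▸ inferInstance
  have : IsProbabilityMeasure ν := hν ▸ inferInstance
  have hwm1 : 1 ≤ w_m := one_le_of_rnDeriv_le hac hwm
  have hw_meas : Measurable w := hw ▸ (Measure.measurable_rnDeriv ν μ).ennreal_toReal
  set g : X × A → ℝ := fun p ↦ -(f p * w p)
  have hg_mem : ∀ p, g p ∈ Set.Icc 0 w_m := fun p ↦ by
    have hw0 : 0 ≤ w p := hw ▸ ENNReal.toReal_nonneg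
    have hwM : w p ≤ w_m := hw ▸ ENNReal.toReal_le_of_le_ofReal (by linarith) (hwm p)
    obtain ⟨hf1, hf0⟩ := hfb p
    constructor <;> simp only [g] <;> nlinarith
  have hg_sq : ∫ p, g p ^ 2 ∂μ ≤ 1 + w_m / 2 * √(2 * (min (klDiv ν μ) (klDiv μ ν)).toReal) := by
    simpa only [g, neg_sq, hw] using integral_sq_mul_rnDeriv_le hac hwm hfin
      fun p ↦ abs_le.2 ⟨(hfb p).1, (hfb p).2.trans zero_le_one⟩
  have hR : ∫ p, f p ∂ν = -∫ p, g p ∂μ := by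
    rw [← integral_rnDeriv_smul hac, ← integral_neg]
    simp [g, hw, mul_comm]
  have key := ofReal_one_sub_exp_le_measure_sampleMean_le (g := g) hn hmeas hindep hdist
    (hf.mul hw_meas).neg (by linarith) hg_mem (by positivity) hg_sq
    (log_pos ((one_lt_div hδ0).2 hδ1))
  rw [exp_neg, exp_log (by positivity), inv_div, div_one] at key
  refine key.trans (measure_mono fun ω hω ↦ ?_)
  simp only [Set.mem_ofPred_eq] at hω ⊢
  have hsum : ∑ i, f (Zs i ω) * w (Zs i ω) = -∑ i, g (Zs i ω) := by
    simp [g, Finset.sum_neg_distrib]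
  rw [hR, hsum, show (w_m * √(2 * (min (klDiv ν μ) (klDiv μ ν)).toReal) + 2)
    = 2 * (1 + w_m / 2 * √(2 * (min (klDiv ν μ) (klDiv μ ν)).toReal)) by ring]
  linarith
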